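/- Let X be a real random variable with finite moments of all orders, let n, k ≥ 1, set m = n(2k−1), and let X₁, …, X_n be i.i.d. copies of X. Define the polynomial p_{n,k}(x) = E[(X₁ − x)^{2k−1}·(X₂ − x)^{2k−1}⋯(X_n − x)^{2k−1} · Δ(X₁,…,X_n)^{2k}]. Then: (a) E[q(X) · p_{n,k}(X)] = 0 for every polynomial q of degree at most n−1 (equivalently, E[X^l · p_{n,k}(X)] = 0 for every l = 0,…,n−1); (b) writing p_{n,k}(x) = ∑_{h=0}^m C(m,h)·(−1)^h·b_{m−h}·x^h with C(m,h) the binomial coefficient, if the polynomial A_m(x) := E[(X − x)^m] has m pairwise distinct complex roots r₁, …, r_m and the linear system b_{m−l} = ∑_{j=1}^m c_j·r_j^{m−l} (l = 0, 1, …, m) admits a solution (c₁,…,c_m) ∈ ℂ^m, then ∑_{j=1}^m c_j = E[Δ(X₁,…,X_n)^{2k}]. -/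

import Mathlib

/-
Let Y₀, Y₁, …, Yₙ be i.i.d. with the law of X. Since Δ(Y₀,…,Yₙ) = ∏ᵢ (Yᵢ − Y₀) · Δ(Y₁,…,Yₙ),
Fubini gives E[X^l p_{n,k}(X)] = E[Y₀^l Δ(Y₀,…,Yₙ)^{2k−1} Δ(Y₁,…,Yₙ)]. Moving Yᵢ to the front
by a cycle of sign (−1)^i does not change the law, and multiplies the odd power of the full
discriminant by (−1)^i; averaging over i, (n + 1) times the expectation is
E[Δ^{2k−1} ∑ᵢ (−1)^i Yᵢ^l Δ(Y without Yᵢ)], and for l < n this sum is the Laplace expansion of a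
determinant with two equal columns.

For (b), the m-th forward difference of p_{n,k} at 0 is m! (−1)^m b₀ by the given expansion, and
m! (−1)^m E[Δ^{2k}] by differencing under the expectation. The equation l = m of the linear system
reads b₀ = ∑ⱼ cⱼ.
-/

open MeasureTheory ProbabilityTheory Filter
open scoped BigOperators Topology

noncomputable section

/-- The Vandermonde product `Δ(y₀,…,y_{k-1}) = ∏_{i<j} (y_j − y_i)`. -/
def vdm {R : Type*} [CommRing R] {k : ℕ} (y : Fin k → R) : R :=
  ∏ p ∈ Finset.univ.filter (fun p : Fin k × Fin k => p.1 < p.2), (y p.2 - y p.1)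

section Vandermonde

variable {R S : Type*} [CommRing R] [CommRing S] {n : ℕ}

theorem map_vdm (f : R →+* S) (y : Fin n → R) : f (vdm y) = vdm (f ∘ y) := by
  simp [vdm, map_prod]

theorem vdm_eq_det (y : Fin n → R) : vdm y = (Matrix.vandermonde y).det := by
  rw [Matrix.det_vandermonde, vdm, Finset.prod_sigma']
  refine Finset.prod_nbij' (fun p => ⟨p.1, p.2⟩) (fun x => (x.1, x.2)) ?_ ?_ ?_ ?_ ?_ <;>
    simp

theorem vdm_comp_perm (y : Fin n → R) (σ : Equiv.Perm (Fin n)) :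
    vdm (y ∘ σ) = Equiv.Perm.sign σ * vdm y := by
  rw [vdm_eq_det, vdm_eq_det, ← Matrix.det_permute]
  rfl

theorem vdm_succ (y : Fin (n + 1) → R) :
    vdm y = (∏ i : Fin n, (y i.succ - y 0)) * vdm (y ∘ Fin.succ) := by
  rw [vdm_eq_det, vdm_eq_det, Matrix.det_vandermonde, Matrix.det_vandermonde, Fin.prod_univ_succ,
    Fin.prod_Ioi_zero]
  simp [Fin.prod_Ioi_succ]

theorem vdm_cons_pow_mul_vdm (x : R) (z : Fin n → R) (e : ℕ) :
    vdm (Fin.cons x z : Fin (n + 1) → R) ^ e * vdm z = (∏ i, (z i - x) ^ e) * vdm z ^ (e + 1) := by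
  rw [vdm_succ, Fin.cons_zero]
  simp only [Fin.cons_succ, Function.comp_def, Finset.prod_pow]
  ring

theorem sum_neg_one_pow_mul_pow_mul_vdm_succAbove {l : ℕ} (hl : l < n) (y : Fin (n + 1) → R) :
    ∑ i : Fin (n + 1), (-1) ^ (i : ℕ) * y i ^ l * vdm (y ∘ i.succAbove) = 0 := by
  let A : Matrix (Fin (n + 1)) (Fin (n + 1)) R := fun i => Fin.cons (y i ^ l) fun j => y i ^ (j : ℕ)
  have hA : A.det = 0 :=
    Matrix.det_zero_of_column_eq (Fin.succ_ne_zero ⟨l, hl⟩) fun i => rfl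
  rw [Matrix.det_succ_column_zero] at hA
  refine (Finset.sum_congr rfl fun i _ => ?_).trans hA
  rw [vdm_eq_det]
  rfl

theorem continuous_vdm {n : ℕ} : Continuous fun z : Fin n → ℝ => vdm z := by
  unfold vdm
  fun_prop

end Vandermonde

namespace Polynomial

open fwdDiff Nat

variable {R : Type*} [CommRing R]

theorem fwdDiff_iter_eval_of_natDegree_le {P : R[X]} {m : ℕ} (hP : P.natDegree ≤ m)
    (x : R) : (Δ_[1])^[m] P.eval x = P.coeff m * m ! := by
  rcases hP.lt_or_eq with hlt | rfl
  · rw [fwdDiff_iter_eq_zero_of_degree_lt hlt, coeff_eq_zero_of_natDegree_lt hlt]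
    simp
  · rw [fwdDiff_iter_degree_eq_factorial, Pi.smul_apply, smul_eq_mul, leadingCoeff]
    rfl

theorem natDegree_C_sub_X_le (a : R) : (C a - X).natDegree ≤ 1 :=
  (natDegree_sub_le _ _).trans (by simpa using natDegree_X_le)

theorem natDegree_C_sub_X_pow_le (a : R) (e : ℕ) : ((C a - X) ^ e).natDegree ≤ e := by
  simpa using natDegree_pow_le_of_le e (natDegree_C_sub_X_le a)

theorem natDegree_prod_C_sub_X_pow_le {n : ℕ} (z : Fin n → R) (e : ℕ) :
    (∏ i, (C (z i) - X) ^ e).natDegree ≤ n * e := by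
  refine (natDegree_prod_le _ _).trans ?_
  refine (Finset.sum_le_sum fun i _ => natDegree_C_sub_X_pow_le (z i) e).trans ?_
  simp

theorem coeff_prod_C_sub_X_pow {n : ℕ} (z : Fin n → R) (e : ℕ) :
    (∏ i, (C (z i) - X) ^ e).coeff (n * e) = (-1) ^ (n * e) := by
  have h := coeff_prod_of_natDegree_le Finset.univ (fun i => (C (z i) - X) ^ e) e fun i _ =>
    natDegree_C_sub_X_pow_le (z i) e
  rw [Finset.card_univ, Fintype.card_fin] at h
  rw [h, Finset.prod_congr rfl fun i _ => ?_, Finset.prod_const, Finset.card_univ, Fintype.card_fin,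
    ← pow_mul, mul_comm]
  simpa using coeff_pow_of_natDegree_le (m := e) (natDegree_C_sub_X_le (z i))

theorem fwdDiff_iter_sum_range_mul_pow (a : ℕ → R) (m : ℕ) (x : R) :
    (Δ_[1])^[m] (fun x => ∑ h ∈ Finset.range (m + 1), a h * x ^ h) x = a m * m ! := by
  have hP : (fun x => ∑ h ∈ Finset.range (m + 1), a h * x ^ h)
      = (∑ h ∈ Finset.range (m + 1), C (a h) * X ^ h).eval := by
    funext x
    simp [eval_finsetSum]
  rw [hP, fwdDiff_iter_eval_of_natDegree_le]
  · simp
  · exact natDegree_sum_le_of_forall_le _ _ fun h hh =>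
      (natDegree_C_mul_X_pow_le _ _).trans (Nat.lt_succ_iff.mp (Finset.mem_range.mp hh))

end Polynomial

section ProductMeasure

variable {α E : Type*} [MeasurableSpace α] [NormedAddCommGroup E] [NormedSpace ℝ E]
  (μ : Measure α) [SigmaFinite μ]

theorem measurePreserving_comp_perm {ι : Type*} [Fintype ι] (σ : Equiv.Perm ι) :
    MeasurePreserving (MeasurableEquiv.arrowCongr' σ.symm (.refl α))
      (Measure.pi fun _ => μ) (Measure.pi fun _ => μ) :=
  measurePreserving_arrowCongr' _ _ σ.symm (.refl α) fun _ => .id μ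

theorem integral_comp_perm {ι : Type*} [Fintype ι] (σ : Equiv.Perm ι) (f : (ι → α) → E) :
    ∫ y, f (y ∘ σ) ∂(Measure.pi fun _ => μ) = ∫ y, f y ∂(Measure.pi fun _ => μ) :=
  (measurePreserving_comp_perm μ σ).integral_comp' f

theorem integral_eq_zero_of_sum_comp_perm_eq_zero {ι ι' : Type*} [Fintype ι] [Fintype ι']
    [Nonempty ι'] {f : (ι → α) → E} (hf : Integrable f (Measure.pi fun _ => μ))
    (σ : ι' → Equiv.Perm ι) (h : ∀ y, ∑ i, f (y ∘ σ i) = 0) :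
    ∫ y, f y ∂(Measure.pi fun _ => μ) = 0 := by
  have hsum : Fintype.card ι' • ∫ y, f y ∂(Measure.pi fun _ => μ) = 0 := by
    calc Fintype.card ι' • ∫ y, f y ∂(Measure.pi fun _ => μ)
        = ∑ i, ∫ y, f (y ∘ σ i) ∂(Measure.pi fun _ => μ) := by
          simp [integral_comp_perm]
      _ = 0 := by
          rw [← integral_finsetSum _ fun i _ => show Integrable (fun y => f (y ∘ σ i)) _ from
            (measurePreserving_comp_perm μ (σ i)).integrable_comp_of_integrable hf]
          simp [h]
  rw [← Nat.cast_smul_eq_nsmul ℝ] at hsum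
  exact (smul_eq_zero.mp hsum).resolve_left (Nat.cast_ne_zero.mpr Fintype.card_ne_zero)

theorem measurePreserving_cons {n : ℕ} :
    MeasurePreserving (fun p : α × (Fin n → α) => (Fin.cons p.1 p.2 : Fin (n + 1) → α))
      (μ.prod (Measure.pi fun _ => μ)) (Measure.pi fun _ => μ) := by
  convert (measurePreserving_piFinSuccAbove (fun _ : Fin (n + 1) => μ) 0).symm using 1
  ext p
  simp [MeasurableEquiv.piFinSuccAbove_symm_apply, Fin.insertNthEquiv_zero]

theorem integral_integral_cons {n : ℕ} {f : (Fin (n + 1) → α) → E}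
    (hf : Integrable f (Measure.pi fun _ => μ)) :
    ∫ x, ∫ z, f (Fin.cons x z) ∂(Measure.pi fun _ => μ) ∂μ = ∫ y, f y ∂(Measure.pi fun _ => μ) := by
  have h := measurePreserving_cons μ (n := n)
  rw [← h.map_eq, integral_map h.measurable.aemeasurable (h.map_eq ▸ hf.aestronglyMeasurable),
    integral_prod (fun p => f (Fin.cons p.1 p.2)) (h.integrable_comp_of_integrable hf)]

theorem MeasureTheory.Integrable.integral_cons {n : ℕ} {f : (Fin (n + 1) → α) → E}
    (hf : Integrable f (Measure.pi fun _ => μ)) :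
    Integrable (fun x => ∫ z, f (Fin.cons x z) ∂(Measure.pi fun _ => μ)) μ :=
  ((measurePreserving_cons μ).integrable_comp_of_integrable hf).integral_prod_left

end ProductMeasure

open fwdDiff in
theorem fwdDiff_iter_integral {β M E : Type*} [MeasurableSpace β] [AddCommMonoid M]
    [NormedAddCommGroup E] [NormedSpace ℝ E] {ν : Measure β} {F : β → M → E}
    (hF : ∀ x, Integrable (fun z => F z x) ν) (h : M) (m : ℕ) (x : M) :
    (Δ_[h])^[m] (fun x => ∫ z, F z x ∂ν) x = ∫ z, (Δ_[h])^[m] (F z) x ∂ν := by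
  simp_rw [fwdDiff_iter_eq_sum_shift, ← Int.cast_smul_eq_zsmul ℝ]
  rw [integral_finsetSum _ fun j _ => ((hF _).smul _ : Integrable (fun z => _ • F z _) ν)]
  simp_rw [integral_smul]

theorem integrable_eval_mvPolynomial {ι : Type*} [Fintype ι] {μ : Measure ℝ} [SigmaFinite μ]
    (hmom : ∀ j : ℕ, Integrable (fun x => x ^ j) μ) (Q : MvPolynomial ι ℝ) :
    Integrable (fun y => MvPolynomial.eval y Q) (Measure.pi fun _ => μ) := by
  simp_rw [MvPolynomial.eval_eq']
  exact integrable_finsetSum _ fun d _ => (Integrable.fintype_prod fun i => hmom (d i)).const_mul _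

theorem map_eq_pi_of_iIndepFun_of_identDistrib {Ω Ω' ι β : Type*} [MeasurableSpace Ω]
    [MeasurableSpace Ω'] [MeasurableSpace β] [Fintype ι] {P : Measure Ω} {Q : Measure Ω'}
    {X : ι → Ω → β} {Y : Ω' → β} (hindep : iIndepFun X P) (hid : ∀ i, IdentDistrib (X i) Y P Q) :
    P.map (fun ω i => X i ω) = Measure.pi fun _ => Q.map Y := by
  rw [hindep.map_fun_eq_pi_map fun i => (hid i).aemeasurable_fst]
  exact congrArg Measure.pi (funext fun i => (hid i).map_eq)

open Polynomial in
theorem integral_eval_mul_eq_zero {α : Type*} [MeasurableSpace α] {μ : Measure α} {f g : α → ℝ}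
    {n : ℕ} (hint : ∀ i < n, Integrable (fun a => f a ^ i * g a) μ)
    (horth : ∀ i < n, ∫ a, f a ^ i * g a ∂μ = 0) {q : ℝ[X]} (hq : q.natDegree < n) :
    ∫ a, q.eval (f a) * g a ∂μ = 0 := by
  simp_rw [eval_eq_sum_range' hq, Finset.sum_mul, mul_assoc]
  rw [integral_finsetSum _ fun i hi => (hint i (Finset.mem_range.mp hi)).const_mul (q.coeff i)]
  refine Finset.sum_eq_zero fun i hi => ?_
  rw [integral_const_mul, horth i (Finset.mem_range.mp hi), mul_zero]

section DiscriminantPolynomial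

open Polynomial fwdDiff Nat

-- The paper's `p_{n,k}`, for a sample drawn from `μ`.
def discrPoly (μ : Measure ℝ) (n k : ℕ) (x : ℝ) : ℝ :=
  ∫ z : Fin n → ℝ, (∏ i, (z i - x) ^ (2 * k - 1)) * vdm z ^ (2 * k) ∂(Measure.pi fun _ => μ)

variable {μ : Measure ℝ} {n : ℕ}

theorem integrable_prod_sub_pow_mul_vdm_pow [SigmaFinite μ]
    (hmom : ∀ j : ℕ, Integrable (fun x => x ^ j) μ) (x : ℝ) (a b : ℕ) :
    Integrable (fun z : Fin n → ℝ => (∏ i, (z i - x) ^ a) * vdm z ^ b) (Measure.pi fun _ => μ) := by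
  refine (integrable_eval_mvPolynomial hmom
    ((∏ i, (MvPolynomial.X i - MvPolynomial.C x) ^ a) * vdm MvPolynomial.X ^ b)).congr
    (ae_of_all _ fun z => ?_)
  simp [map_vdm, Function.comp_def]

theorem integrable_pow_mul_vdm_pow_mul_vdm_succ [SigmaFinite μ]
    (hmom : ∀ j : ℕ, Integrable (fun x => x ^ j) μ) (l e : ℕ) :
    Integrable (fun y : Fin (n + 1) → ℝ => y 0 ^ l * vdm y ^ e * vdm (y ∘ Fin.succ))
      (Measure.pi fun _ => μ) := by
  refine (integrable_eval_mvPolynomial hmom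
    (MvPolynomial.X 0 ^ l * vdm MvPolynomial.X ^ e * vdm (MvPolynomial.X ∘ Fin.succ))).congr
    (ae_of_all _ fun y => ?_)
  simp [map_vdm, Function.comp_def]

theorem integral_pow_mul_vdm_pow_mul_vdm_succ_eq_zero [SigmaFinite μ]
    (hmom : ∀ j : ℕ, Integrable (fun x => x ^ j) μ) {l e : ℕ} (hl : l < n) (he : Odd e) :
    ∫ y : Fin (n + 1) → ℝ, y 0 ^ l * vdm y ^ e * vdm (y ∘ Fin.succ) ∂(Measure.pi fun _ => μ)
      = 0 := by
  refine integral_eq_zero_of_sum_comp_perm_eq_zero μ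
    (integrable_pow_mul_vdm_pow_mul_vdm_succ hmom l e) (fun i => (Fin.cycleRange i).symm)
    fun y => ?_
  have hcycle (i : Fin (n + 1)) : (y ∘ (Fin.cycleRange i).symm) ∘ Fin.succ = y ∘ i.succAbove :=
    funext fun j => congrArg y (Fin.cycleRange_symm_succ i j)
  have hterm (i : Fin (n + 1)) :
      (y ∘ (Fin.cycleRange i).symm) 0 ^ l * vdm (y ∘ (Fin.cycleRange i).symm) ^ e *
        vdm ((y ∘ (Fin.cycleRange i).symm) ∘ Fin.succ)
      = vdm y ^ e * ((-1) ^ (i : ℕ) * y i ^ l * vdm (y ∘ i.succAbove)) := by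
    rw [vdm_comp_perm, hcycle, Function.comp_apply, Fin.cycleRange_symm_zero,
      Equiv.Perm.sign_symm, Fin.sign_cycleRange]
    push_cast
    rw [mul_pow, ← pow_mul, mul_comm (i : ℕ), pow_mul, he.neg_one_pow]
    ring
  simp_rw [hterm, ← Finset.mul_sum, sum_neg_one_pow_mul_pow_mul_vdm_succAbove hl, mul_zero]

theorem integral_cons_eq_pow_mul_discrPoly {k : ℕ} (hk : 1 ≤ k) (l : ℕ) (x : ℝ) :
    ∫ z : Fin n → ℝ, (Fin.cons x z : Fin (n + 1) → ℝ) 0 ^ l *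
        vdm (Fin.cons x z : Fin (n + 1) → ℝ) ^ (2 * k - 1) *
        vdm ((Fin.cons x z : Fin (n + 1) → ℝ) ∘ Fin.succ) ∂(Measure.pi fun _ => μ)
      = x ^ l * discrPoly μ n k x := by
  rw [discrPoly, ← integral_const_mul]
  refine integral_congr_ae (ae_of_all _ fun z => ?_)
  have h2k : 2 * k = 2 * k - 1 + 1 := by omega
  dsimp only
  rw [Fin.cons_zero, Fin.cons_comp_succ, mul_assoc, vdm_cons_pow_mul_vdm, ← h2k]

theorem integrable_pow_mul_discrPoly [SigmaFinite μ]
    (hmom : ∀ j : ℕ, Integrable (fun x => x ^ j) μ) {k : ℕ} (hk : 1 ≤ k) (l : ℕ) :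
    Integrable (fun x => x ^ l * discrPoly μ n k x) μ := by
  simpa only [integral_cons_eq_pow_mul_discrPoly hk] using
    (integrable_pow_mul_vdm_pow_mul_vdm_succ hmom l (2 * k - 1)).integral_cons μ

theorem integral_pow_mul_discrPoly_eq_zero [SigmaFinite μ]
    (hmom : ∀ j : ℕ, Integrable (fun x => x ^ j) μ) {k l : ℕ} (hk : 1 ≤ k) (hl : l < n) :
    ∫ x, x ^ l * discrPoly μ n k x ∂μ = 0 := by
  simp_rw [← integral_cons_eq_pow_mul_discrPoly hk]
  rw [integral_integral_cons μ (integrable_pow_mul_vdm_pow_mul_vdm_succ hmom l _)]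
  exact integral_pow_mul_vdm_pow_mul_vdm_succ_eq_zero hmom hl ⟨k - 1, by omega⟩

theorem fwdDiff_iter_discrPoly [SigmaFinite μ]
    (hmom : ∀ j : ℕ, Integrable (fun x => x ^ j) μ) (k : ℕ) (x : ℝ) :
    (Δ_[1])^[n * (2 * k - 1)] (discrPoly μ n k) x
      = (-1) ^ (n * (2 * k - 1)) * (n * (2 * k - 1))! *
        ∫ z : Fin n → ℝ, vdm z ^ (2 * k) ∂(Measure.pi fun _ => μ) := by
  unfold discrPoly
  rw [fwdDiff_iter_integral fun x => integrable_prod_sub_pow_mul_vdm_pow hmom x _ _,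
    ← integral_const_mul]
  refine integral_congr_ae (ae_of_all _ fun z => ?_)
  have hP : (fun x => (∏ i, (z i - x) ^ (2 * k - 1)) * vdm z ^ (2 * k))
      = ((∏ i, (C (z i) - X) ^ (2 * k - 1)) * C (vdm z ^ (2 * k))).eval := by
    funext x
    simp [eval_prod]
  dsimp only
  rw [hP, fwdDiff_iter_eval_of_natDegree_le
    ((natDegree_mul_C_le _ _).trans (natDegree_prod_C_sub_X_pow_le z _)), coeff_mul_C,
    coeff_prod_C_sub_X_pow]
  ring

end DiscriminantPolynomial

theorem stmt19_general {Ω : Type*} [MeasurableSpace Ω] (P : Measure Ω) [IsProbabilityMeasure P]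
    (X0 : Ω → ℝ) (hmeas : Measurable X0)
    (hmom : ∀ j : ℕ, Integrable (fun ω => X0 ω ^ j) P)
    (n k : ℕ) (hn : 1 ≤ n) (hk : 1 ≤ k)
    (mdeg : ℕ) (hmdeg : mdeg = n * (2 * k - 1))
    (X : Fin n → Ω → ℝ)
    (hindep : iIndepFun X P)
    (hid : ∀ i, IdentDistrib (X i) X0 P P)
    (pnk : ℝ → ℝ)
    (hpnk : ∀ x : ℝ, pnk x =
      ∫ ω, (∏ i, (X i ω - x) ^ (2 * k - 1)) * (vdm fun i => X i ω) ^ (2 * k) ∂P)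
    (b : ℕ → ℝ)
    (hb : ∀ x : ℝ, pnk x = ∑ h ∈ Finset.range (mdeg + 1),
      (mdeg.choose h : ℝ) * (-1 : ℝ) ^ h * b (mdeg - h) * x ^ h) :
    ((∀ q : Polynomial ℝ, q.natDegree ≤ n - 1 →
        ∫ ω, q.eval (X0 ω) * pnk (X0 ω) ∂P = 0) ∧
      (∀ l : ℕ, l ≤ n - 1 → ∫ ω, X0 ω ^ l * pnk (X0 ω) ∂P = 0)) ∧
    (∀ r : Fin mdeg → ℂ, Function.Injective r →
      -- `r₁,…,r_m` are roots of `A_m(x) = E[(X−x)^m] = ∑_l C(m,l)·E[X^{m−l}]·(−x)^l`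
      (∀ j, ∑ l ∈ Finset.range (mdeg + 1),
          (mdeg.choose l : ℂ) * ((∫ ω, X0 ω ^ (mdeg - l) ∂P : ℝ) : ℂ) * (-(r j)) ^ l = 0) →
      ∀ cc : Fin mdeg → ℂ,
        (∀ l : ℕ, l ≤ mdeg →
          ((b (mdeg - l) : ℝ) : ℂ) = ∑ j, cc j * r j ^ (mdeg - l)) →
        ∑ j, cc j = ((∫ ω, (vdm fun i => X i ω) ^ (2 * k) ∂P : ℝ) : ℂ)) := by
  subst hmdeg
  set μ := P.map X0
  have hμ : ∀ j : ℕ, Integrable (fun x : ℝ => x ^ j) μ := fun j =>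
    (integrable_map_measure (by fun_prop) hmeas.aemeasurable).mpr (hmom j)
  have hlaw := map_eq_pi_of_iIndepFun_of_identDistrib hindep hid
  have hsample : AEMeasurable (fun ω i => X i ω) P :=
    aemeasurable_pi_lambda _ fun i => (hid i).aemeasurable_fst
  have hpnk_eq : pnk = discrPoly μ n k := funext fun x => by
    rw [hpnk, discrPoly, ← hlaw, integral_map hsample (hlaw ▸
      (integrable_prod_sub_pow_mul_vdm_pow hμ x _ _).aestronglyMeasurable)]
  have hintμ (l : ℕ) : Integrable (fun x => x ^ l * pnk x) μ :=
    hpnk_eq ▸ integrable_pow_mul_discrPoly hμ hk l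
  have hint (l : ℕ) : Integrable (fun ω => X0 ω ^ l * pnk (X0 ω)) P :=
    (integrable_map_measure (hintμ l).aestronglyMeasurable hmeas.aemeasurable).mp (hintμ l)
  have horth (l : ℕ) (hl : l < n) : ∫ ω, X0 ω ^ l * pnk (X0 ω) ∂P = 0 := by
    rw [← integral_map hmeas.aemeasurable (hintμ l).aestronglyMeasurable, hpnk_eq]
    exact integral_pow_mul_discrPoly_eq_zero hμ hk hl
  refine ⟨⟨fun q hq => integral_eval_mul_eq_zero (fun i _ => hint i) horth (by omega),
    fun l hl => horth l (by omega)⟩, fun r _ _ cc hcc => ?_⟩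
  have hb0 : b 0 = ∫ z : Fin n → ℝ, vdm z ^ (2 * k) ∂(Measure.pi fun _ => μ) := by
    have h := fwdDiff_iter_discrPoly hμ (n := n) k 0
    rw [← hpnk_eq, funext hb, Polynomial.fwdDiff_iter_sum_range_mul_pow] at h
    simp only [Nat.choose_self, Nat.sub_self, Nat.cast_one, one_mul, mul_right_comm _ (b 0)] at h
    exact mul_left_cancel₀ (mul_ne_zero (pow_ne_zero _ (by norm_num)) (by positivity)) h
  have hvdm : ∫ ω, (vdm fun i => X i ω) ^ (2 * k) ∂P
      = ∫ z : Fin n → ℝ, vdm z ^ (2 * k) ∂(Measure.pi fun _ => μ) := by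
    rw [← hlaw, integral_map (f := fun z : Fin n → ℝ => vdm z ^ (2 * k)) hsample
      (continuous_vdm.pow _).aestronglyMeasurable]
  simpa [hvdm, hb0] using (hcc _ le_rfl).symm

theorem stmt19 {Ω : Type*} [MeasurableSpace Ω] (P : Measure Ω) [IsProbabilityMeasure P]
    (X0 : Ω → ℝ) (hmeas : Measurable X0)
    (hmom : ∀ j : ℕ, Integrable (fun ω => X0 ω ^ j) P)
    (n k : ℕ) (hn : 1 ≤ n) (hk : 1 ≤ k)
    (mdeg : ℕ) (hmdeg : mdeg = n * (2 * k - 1))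
    (X : Fin n → Ω → ℝ) (hXmeas : ∀ i, Measurable (X i))
    (hindep : iIndepFun X P)
    (hid : ∀ i, IdentDistrib (X i) X0 P P)
    (pnk : ℝ → ℝ)
    (hpnk : ∀ x : ℝ, pnk x =
      ∫ ω, (∏ i, (X i ω - x) ^ (2 * k - 1)) * (vdm fun i => X i ω) ^ (2 * k) ∂P)
    (b : ℕ → ℝ)
    (hb : ∀ x : ℝ, pnk x = ∑ h ∈ Finset.range (mdeg + 1),
      (mdeg.choose h : ℝ) * (-1 : ℝ) ^ h * b (mdeg - h) * x ^ h) :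
    ((∀ q : Polynomial ℝ, q.natDegree ≤ n - 1 →
        ∫ ω, q.eval (X0 ω) * pnk (X0 ω) ∂P = 0) ∧
      (∀ l : ℕ, l ≤ n - 1 → ∫ ω, X0 ω ^ l * pnk (X0 ω) ∂P = 0)) ∧
    (∀ r : Fin mdeg → ℂ, Function.Injective r →
      -- `r₁,…,r_m` are roots of `A_m(x) = E[(X−x)^m] = ∑_l C(m,l)·E[X^{m−l}]·(−x)^l`
      (∀ j, ∑ l ∈ Finset.range (mdeg + 1),
          (mdeg.choose l : ℂ) * ((∫ ω, X0 ω ^ (mdeg - l) ∂P : ℝ) : ℂ) * (-(r j)) ^ l = 0) →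
      ∀ cc : Fin mdeg → ℂ,
        (∀ l : ℕ, l ≤ mdeg →
          ((b (mdeg - l) : ℝ) : ℂ) = ∑ j, cc j * r j ^ (mdeg - l)) →
        ∑ j, cc j = ((∫ ω, (vdm fun i => X i ω) ^ (2 * k) ∂P : ℝ) : ℂ)) :=
  stmt19_general P X0 hmeas hmom n k hn hk mdeg hmdeg X hindep hid pnk hpnk b hb
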